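/- arXiv:2512.08689 — 2 statements merged into one kernel-verified Lean document; each statement's English description precedes it below -/
import Mathlib

section
/- If for symmetric matrices W₁ ∈ ℝ^{n×n}, W₂ ∈ ℝ^{m×m} and X ∈ ℝ^{n×m} the block matrix [[W₁, X],[Xᵀ, W₂]] is positive semidefinite, then ‖X‖_* ≤ (1/2)(Tr(W₁) + Tr(W₂)). -/
open Matrix

/-- Nuclear norm: the sum of the singular values of `X`, i.e. the square roots of the
eigenvalues of `XᵀX`. -/
noncomputable def nuclearNorm {n m : ℕ} (X : Matrix (Fin n) (Fin m) ℝ) : ℝ :=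
  ∑ i, Real.sqrt ((Matrix.isHermitian_conjTranspose_mul_self X).eigenvalues i)

/-!
Let `v i` be an orthonormal eigenbasis of `Xᵀ X` with eigenvalues `λ i`, so that `‖X‖_* = ∑ √(λ i)`.
Whenever `λ i ≠ 0` the vectors `u i = X (v i) / √(λ i)` are orthonormal and `u i ⬝ X (v i) = √(λ i)`.
Testing the block matrix against `(u i, -v i)` gives `2 √(λ i) ≤ u i ⬝ W₁ u i + v i ⬝ W₂ v i`.
Finally, writing a positive semidefinite `W` as `∑ w wᵀ`, Bessel's inequality shows that the
quadratic form of `W` summed over any orthonormal family is at most `trace W = ∑ w ⬝ w`.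
-/

namespace Matrix

variable {n m ι : Type*} [Fintype n] [Fintype m] [Fintype ι]

theorem PosSemidef.two_mul_dotProduct_mulVec_le_of_fromBlocks {A : Matrix n n ℝ}
    {B : Matrix n m ℝ} {D : Matrix m m ℝ} (h : (fromBlocks A B Bᵀ D).PosSemidef)
    (x : n → ℝ) (y : m → ℝ) :
    2 * (x ⬝ᵥ B *ᵥ y) ≤ x ⬝ᵥ A *ᵥ x + y ⬝ᵥ D *ᵥ y := by
  have hxy := h.dotProduct_mulVec_nonneg (Sum.elim x (-y))
  simp only [fromBlocks_mulVec, star_trivial, sumElim_dotProduct_sumElim, dotProduct_add,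
    Sum.elim_comp_inl, Sum.elim_comp_inr, mulVec_neg, neg_dotProduct, dotProduct_neg,
    dotProduct_transpose_mulVec] at hxy
  linarith

theorem _root_.Orthonormal.sum_dotProduct_sq_le {u : ι → EuclideanSpace ℝ n}
    (hu : Orthonormal ℝ u) (x : n → ℝ) :
    ∑ i, (x ⬝ᵥ (u i).ofLp) ^ 2 ≤ x ⬝ᵥ x := by
  have hx : ‖(WithLp.toLp 2 x : EuclideanSpace ℝ n)‖ ^ 2 = x ⬝ᵥ x := by
    rw [← real_inner_self_eq_norm_sq, EuclideanSpace.inner_eq_star_dotProduct, star_trivial]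
  simpa [EuclideanSpace.inner_eq_star_dotProduct, dotProduct_comm, hx] using
    hu.sum_inner_products_le (s := Finset.univ) (WithLp.toLp 2 x : EuclideanSpace ℝ n)

theorem PosSemidef.sum_dotProduct_mulVec_le_trace {W : Matrix n n ℝ} (hW : W.PosSemidef)
    {u : ι → EuclideanSpace ℝ n} (hu : Orthonormal ℝ u) :
    ∑ i, (u i).ofLp ⬝ᵥ W *ᵥ (u i).ofLp ≤ W.trace := by
  obtain ⟨r, w, rfl⟩ := posSemidef_iff_eq_sum_vecMulVec.mp hW
  simp only [star_trivial, sum_mulVec, vecMulVec_mulVec, op_smul_eq_smul,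
    dotProduct_comm (u _).ofLp, sum_dotProduct, smul_dotProduct, smul_eq_mul, ← sq, trace_sum,
    trace_vecMulVec]
  rw [Finset.sum_comm]
  exact Finset.sum_le_sum fun k _ => hu.sum_dotProduct_sq_le (w k)

variable [DecidableEq m] {X : Matrix n m ℝ}

theorem IsHermitian.mulVec_eigenvectorBasis_dotProduct_mulVec
    (hX : (Xᴴ * X).IsHermitian) (i j : m) :
    X *ᵥ (hX.eigenvectorBasis i).ofLp ⬝ᵥ X *ᵥ (hX.eigenvectorBasis j).ofLp =
      if i = j then hX.eigenvalues i else 0 := by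
  have hv := orthonormal_iff_ite.mp hX.eigenvectorBasis.orthonormal i j
  rw [EuclideanSpace.inner_eq_star_dotProduct, star_trivial] at hv
  rw [← dotProduct_transpose_mulVec, mulVec_mulVec, ← conjTranspose_eq_transpose_of_trivial,
    hX.mulVec_eigenvectorBasis, dotProduct_smul, hv, smul_eq_mul]
  split_ifs with hij <;> simp [hij]

theorem IsHermitian.exists_orthonormal_dotProduct_mulVec_eigenvectorBasis
    (hX : (Xᴴ * X).IsHermitian) :
    ∃ u : {i // hX.eigenvalues i ≠ 0} → EuclideanSpace ℝ n, Orthonormal ℝ u ∧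
      ∀ i, (u i).ofLp ⬝ᵥ X *ᵥ (hX.eigenvectorBasis i).ofLp = √(hX.eigenvalues i) := by
  have hsq (i : m) : √(hX.eigenvalues i) ^ 2 = hX.eigenvalues i :=
    Real.sq_sqrt (eigenvalues_conjTranspose_mul_self_nonneg X i)
  have hσ (i : {i // hX.eigenvalues i ≠ 0}) : √(hX.eigenvalues i) ≠ 0 :=
    (Real.sqrt_ne_zero (eigenvalues_conjTranspose_mul_self_nonneg X i)).mpr i.2
  refine ⟨fun i => (√(hX.eigenvalues i))⁻¹ • WithLp.toLp 2 (X *ᵥ (hX.eigenvectorBasis i).ofLp),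
    orthonormal_iff_ite.mpr fun i j => ?_, fun i => ?_⟩
  · rw [EuclideanSpace.inner_eq_star_dotProduct, star_trivial]
    simp only [WithLp.ofLp_smul, smul_dotProduct, dotProduct_smul,
      hX.mulVec_eigenvectorBasis_dotProduct_mulVec, Subtype.ext_iff]
    rcases eq_or_ne (i : m) j with hij | hij
    · rw [if_pos hij.symm, if_pos hij, hij, smul_eq_mul, smul_eq_mul, ← mul_assoc, ← sq,
        inv_pow, hsq, inv_mul_cancel₀ j.2]
    · simp [hij, hij.symm]
  · simp only [WithLp.ofLp_smul, smul_dotProduct, hX.mulVec_eigenvectorBasis_dotProduct_mulVec,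
      if_pos, smul_eq_mul]
    rw [inv_mul_eq_iff_eq_mul₀ (hσ i), ← sq, hsq]

end Matrix

theorem nuclearNorm_le_half_trace_general {n m : ℕ}
    (W₁ : Matrix (Fin n) (Fin n) ℝ) (W₂ : Matrix (Fin m) (Fin m) ℝ)
    (X : Matrix (Fin n) (Fin m) ℝ)
    (hpsd : (Matrix.fromBlocks W₁ X Xᵀ W₂).PosSemidef) :
    nuclearNorm X ≤ (1 / 2) * (W₁.trace + W₂.trace) := by
  set hX := isHermitian_conjTranspose_mul_self X
  obtain ⟨u, hu, huv⟩ := hX.exists_orthonormal_dotProduct_mulVec_eigenvectorBasis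
  have hW₁ : W₁.PosSemidef := hpsd.submatrix Sum.inl
  have hW₂ : W₂.PosSemidef := hpsd.submatrix Sum.inr
  have hsupp : nuclearNorm X = ∑ i : {i // hX.eigenvalues i ≠ 0}, √(hX.eigenvalues i) := by
    rw [nuclearNorm, ← Finset.sum_filter_of_ne (p := fun i => hX.eigenvalues i ≠ 0)
      fun i _ hi h0 => hi (by rw [h0, Real.sqrt_zero])]
    exact Finset.sum_subtype _ Finset.mem_filter_univ _
  calc nuclearNorm X
      = (1 / 2) * ∑ i, 2 * ((u i).ofLp ⬝ᵥ X *ᵥ (hX.eigenvectorBasis i).ofLp) := by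
        simp only [hsupp, huv, ← Finset.mul_sum]
        ring
    _ ≤ (1 / 2) * ∑ i, ((u i).ofLp ⬝ᵥ W₁ *ᵥ (u i).ofLp +
          (hX.eigenvectorBasis i).ofLp ⬝ᵥ W₂ *ᵥ (hX.eigenvectorBasis i).ofLp) := by
        gcongr with i
        exact hpsd.two_mul_dotProduct_mulVec_le_of_fromBlocks _ _
    _ ≤ (1 / 2) * (W₁.trace + W₂.trace) := by
        rw [Finset.sum_add_distrib]
        gcongr
        · exact hW₁.sum_dotProduct_mulVec_le_trace hu
        · exact hW₂.sum_dotProduct_mulVec_le_trace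
            (hX.eigenvectorBasis.orthonormal.comp _ Subtype.val_injective)

/-- If the block matrix `[[W₁, X], [Xᵀ, W₂]]` is positive semidefinite
(with `W₁, W₂` symmetric), then `‖X‖_* ≤ (1/2)(Tr W₁ + Tr W₂)`. -/
theorem nuclearNorm_le_half_trace {n m : ℕ}
    (W₁ : Matrix (Fin n) (Fin n) ℝ) (W₂ : Matrix (Fin m) (Fin m) ℝ)
    (X : Matrix (Fin n) (Fin m) ℝ)
    (hW₁ : W₁ᵀ = W₁) (hW₂ : W₂ᵀ = W₂)
    (hpsd : (Matrix.fromBlocks W₁ X Xᵀ W₂).PosSemidef) :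
    nuclearNorm X ≤ (1 / 2) * (W₁.trace + W₂.trace) :=
  nuclearNorm_le_half_trace_general W₁ W₂ X hpsd
end

section
/- For any X ∈ ℝ^{n×m} with SVD X = UΣVᵀ, setting W₁ = UΣUᵀ and W₂ = VΣVᵀ yields a positive semidefinite block matrix [[W₁, X],[Xᵀ, W₂]] with (1/2)(Tr(W₁) + Tr(W₂)) = ‖X‖_*. Consequently, ‖X‖_* = min{(1/2)(Tr W₁ + Tr W₂) : [[W₁,X],[Xᵀ,W₂]] ⪰ 0}. -/
/-!
With `D = diagonal σ`, the proposed block matrix is `[U; V] D [U; V]ᵀ`, hence positive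
semidefinite, and `V D Vᵀ` is the positive square root of `XᵀX`, so both diagonal blocks have
trace `∑ σ = ‖X‖_*`. Conversely, testing any positive semidefinite completion against `[U; -V]`
gives `2 tr (Uᵀ X V) ≤ tr (Uᵀ W₁ U) + tr (Vᵀ W₂ V)`; here `tr (Uᵀ X V) = ∑ σ`, and compressing a
positive semidefinite matrix to the column space of an isometry does not increase its trace.
-/

open Matrix

open scoped MatrixOrder

namespace Matrix

lemma PosSemidef.of_fromBlocks₁₁ {m n : Type*} {A : Matrix m m ℝ} {B : Matrix m n ℝ}
    {C : Matrix n m ℝ} {D : Matrix n n ℝ} (h : (fromBlocks A B C D).PosSemidef) :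
    A.PosSemidef :=
  h.submatrix Sum.inl

lemma PosSemidef.of_fromBlocks₂₂ {m n : Type*} {A : Matrix m m ℝ} {B : Matrix m n ℝ}
    {C : Matrix n m ℝ} {D : Matrix n n ℝ} (h : (fromBlocks A B C D).PosSemidef) :
    D.PosSemidef :=
  h.submatrix Sum.inr

lemma transpose_eq_of_svd {m n k : Type*} [Fintype k] [DecidableEq k] {X : Matrix m n ℝ}
    {U : Matrix m k ℝ} {V : Matrix n k ℝ} {σ : k → ℝ} (hSVD : X = U * diagonal σ * Vᵀ) :
    Xᵀ = V * diagonal σ * Uᵀ := by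
  rw [hSVD, transpose_mul, transpose_mul, diagonal_transpose, transpose_transpose,
    Matrix.mul_assoc]

variable {m n k : Type*} [Fintype m] [Fintype n] [Fintype k]

lemma PosSemidef.transpose_mul_mul_same {A : Matrix n n ℝ} (hA : A.PosSemidef)
    (B : Matrix n k ℝ) : (Bᵀ * A * B).PosSemidef :=
  hA.conjTranspose_mul_mul_same B

lemma PosSemidef.mul_mul_transpose_same {A : Matrix k k ℝ} (hA : A.PosSemidef)
    (B : Matrix n k ℝ) : (B * A * Bᵀ).PosSemidef :=
  hA.mul_mul_conjTranspose_same B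

lemma trace_cfcSqrt [DecidableEq n] {A : Matrix n n ℝ} (hA : A.PosSemidef) :
    (CFC.sqrt A).trace = ∑ i, √(hA.1.eigenvalues i) := by
  rw [CFC.sqrt_eq_cfc, cfc_nnreal_eq_real _ A, hA.1.cfc_eq, IsHermitian.cfc,
    Unitary.conjStarAlgAut_apply, trace_mul_cycle,
    (mem_unitaryGroup_iff').mp hA.1.eigenvectorUnitary.2, one_mul, trace_diagonal]
  simp [max_eq_left (hA.eigenvalues_nonneg _)]

lemma transpose_mul_mul_cancel_left {p : Type*} [DecidableEq k] {U : Matrix n k ℝ}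
    (hU : Uᵀ * U = 1) (M : Matrix k p ℝ) : Uᵀ * (U * M) = M := by
  rw [← Matrix.mul_assoc, hU, Matrix.one_mul]

lemma trace_mul_diagonal_mul_transpose [DecidableEq k] {U : Matrix n k ℝ} (hU : Uᵀ * U = 1)
    (σ : k → ℝ) : (U * diagonal σ * Uᵀ).trace = ∑ i, σ i := by
  rw [trace_mul_cycle, hU, Matrix.one_mul, trace_diagonal]

/-- `U Uᵀ` is the orthogonal projection onto the column space of `U`, and `W` splits as
`tr (W U Uᵀ) + tr ((1 - U Uᵀ) W (1 - U Uᵀ))`, whose second term is nonnegative. -/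
lemma trace_transpose_mul_mul_le_trace [DecidableEq n] [DecidableEq k] {W : Matrix n n ℝ}
    (hW : W.PosSemidef) {U : Matrix n k ℝ} (hU : Uᵀ * U = 1) :
    (Uᵀ * W * U).trace ≤ W.trace := by
  set Q : Matrix n n ℝ := 1 - U * Uᵀ
  have hQQ : Q * Q = Q := by
    simp only [Q, sub_mul, mul_sub, Matrix.one_mul, Matrix.mul_one, Matrix.mul_assoc,
      transpose_mul_mul_cancel_left hU, sub_self, sub_zero]
  have hQt : Qᵀ = Q := by simp [Q, transpose_sub, transpose_mul]
  have hWQ : 0 ≤ (W * Q).trace := by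
    have := (hW.mul_mul_transpose_same Q).trace_nonneg
    rwa [hQt, trace_mul_cycle, hQQ, trace_mul_comm] at this
  have hsplit : W.trace = (Uᵀ * W * U).trace + (W * Q).trace := by
    rw [trace_mul_cycle, trace_mul_comm, ← trace_add, ← Matrix.mul_add]
    simp [Q]
  linarith

lemma two_mul_trace_le_of_posSemidef_fromBlocks {W₁ : Matrix m m ℝ} {X : Matrix m n ℝ}
    {W₂ : Matrix n n ℝ} (h : (fromBlocks W₁ X Xᵀ W₂).PosSemidef) (U : Matrix m k ℝ)
    (V : Matrix n k ℝ) :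
    2 * (Uᵀ * X * V).trace ≤ (Uᵀ * W₁ * U).trace + (Vᵀ * W₂ * V).trace := by
  have h0 := (h.transpose_mul_mul_same (fromRows U (-V))).trace_nonneg
  have hsym : (Vᵀ * Xᵀ * U).trace = (Uᵀ * X * V).trace := by
    rw [← trace_transpose]; simp [transpose_mul, Matrix.mul_assoc]
  rw [transpose_fromRows, Matrix.mul_assoc, fromBlocks_mul_fromRows, fromCols_mul_fromRows]
    at h0
  simp only [Matrix.mul_add, Matrix.mul_neg, transpose_neg, Matrix.neg_mul, trace_add,
    trace_neg, neg_neg, ← Matrix.mul_assoc] at h0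
  linarith

lemma posSemidef_fromBlocks_mul_mul_transpose {D : Matrix k k ℝ} (hD : D.PosSemidef)
    (U : Matrix m k ℝ) (V : Matrix n k ℝ) :
    (fromBlocks (U * D * Uᵀ) (U * D * Vᵀ) (V * D * Uᵀ) (V * D * Vᵀ)).PosSemidef := by
  have h := hD.mul_mul_transpose_same (fromRows U V)
  rwa [transpose_fromRows, fromRows_mul, fromRows_mul_fromCols] at h

section SVD

variable [DecidableEq k] {X : Matrix m n ℝ} {U : Matrix m k ℝ} {V : Matrix n k ℝ} {σ : k → ℝ}

lemma transpose_mul_self_eq_of_svd (hU : Uᵀ * U = 1) (hV : Vᵀ * V = 1)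
    (hSVD : X = U * diagonal σ * Vᵀ) :
    Xᵀ * X = (V * diagonal σ * Vᵀ) * (V * diagonal σ * Vᵀ) := by
  rw [transpose_eq_of_svd hSVD, hSVD]
  simp only [Matrix.mul_assoc, transpose_mul_mul_cancel_left hU,
    transpose_mul_mul_cancel_left hV]

lemma cfcSqrt_transpose_mul_self_of_svd [DecidableEq n] (hσ : ∀ i, 0 ≤ σ i) (hU : Uᵀ * U = 1)
    (hV : Vᵀ * V = 1) (hSVD : X = U * diagonal σ * Vᵀ) :
    CFC.sqrt (Xᵀ * X) = V * diagonal σ * Vᵀ :=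
  CFC.sqrt_unique (transpose_mul_self_eq_of_svd hU hV hSVD).symm
    ((posSemidef_diagonal_iff.mpr hσ).mul_mul_transpose_same V).nonneg

lemma trace_transpose_mul_mul_of_svd (hU : Uᵀ * U = 1) (hV : Vᵀ * V = 1)
    (hSVD : X = U * diagonal σ * Vᵀ) : (Uᵀ * X * V).trace = ∑ i, σ i := by
  rw [hSVD]
  simp only [Matrix.mul_assoc, transpose_mul_mul_cancel_left hU, hV, Matrix.mul_one,
    trace_diagonal]

lemma two_mul_sum_le_trace_add_trace_of_svd [DecidableEq m] [DecidableEq n]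
    (hU : Uᵀ * U = 1) (hV : Vᵀ * V = 1) (hSVD : X = U * diagonal σ * Vᵀ)
    {W₁ : Matrix m m ℝ} {W₂ : Matrix n n ℝ} (h : (fromBlocks W₁ X Xᵀ W₂).PosSemidef) :
    2 * ∑ i, σ i ≤ W₁.trace + W₂.trace := by
  have hUV := two_mul_trace_le_of_posSemidef_fromBlocks h U V
  rw [trace_transpose_mul_mul_of_svd hU hV hSVD] at hUV
  linarith [trace_transpose_mul_mul_le_trace h.of_fromBlocks₁₁ hU,
    trace_transpose_mul_mul_le_trace h.of_fromBlocks₂₂ hV]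

end SVD

end Matrix

lemma nuclearNorm_eq_trace_cfcSqrt {n m : ℕ} (X : Matrix (Fin n) (Fin m) ℝ) :
    nuclearNorm X = (CFC.sqrt (Xᵀ * X)).trace :=
  (trace_cfcSqrt (posSemidef_conjTranspose_mul_self X)).symm

lemma nuclearNorm_eq_sum_of_svd {n m k : ℕ} {X : Matrix (Fin n) (Fin m) ℝ}
    {U : Matrix (Fin n) (Fin k) ℝ} {V : Matrix (Fin m) (Fin k) ℝ} {σ : Fin k → ℝ}
    (hσ : ∀ i, 0 ≤ σ i) (hU : Uᵀ * U = 1) (hV : Vᵀ * V = 1)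
    (hSVD : X = U * diagonal σ * Vᵀ) : nuclearNorm X = ∑ i, σ i := by
  rw [nuclearNorm_eq_trace_cfcSqrt, cfcSqrt_transpose_mul_self_of_svd hσ hU hV hSVD,
    trace_mul_diagonal_mul_transpose hV]

/-- Given a (thin) SVD `X = U S Vᵀ`, the choices `W₁ = U S Uᵀ` and
`W₂ = V S Vᵀ` make the block matrix `[[W₁, X], [Xᵀ, W₂]]` positive semidefinite with
`(1/2)(Tr W₁ + Tr W₂) = ‖X‖_*`; consequently the nuclear norm is the minimum value of
`(1/2)(Tr W₁ + Tr W₂)` over all PSD completions. -/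
theorem nuclearNorm_sdp_attained {n m k : ℕ}
    (X : Matrix (Fin n) (Fin m) ℝ)
    (U : Matrix (Fin n) (Fin k) ℝ) (V : Matrix (Fin m) (Fin k) ℝ)
    (σ : Fin k → ℝ) (hσ : ∀ i, 0 ≤ σ i)
    (hU : Uᵀ * U = 1) (hV : Vᵀ * V = 1)
    (hSVD : X = U * Matrix.diagonal σ * Vᵀ) :
    (Matrix.fromBlocks (U * Matrix.diagonal σ * Uᵀ) X Xᵀ
        (V * Matrix.diagonal σ * Vᵀ)).PosSemidef ∧
    (1 / 2) * ((U * Matrix.diagonal σ * Uᵀ).trace + (V * Matrix.diagonal σ * Vᵀ).trace) =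
      nuclearNorm X ∧
    IsLeast {t : ℝ | ∃ (W₁ : Matrix (Fin n) (Fin n) ℝ) (W₂ : Matrix (Fin m) (Fin m) ℝ),
        (Matrix.fromBlocks W₁ X Xᵀ W₂).PosSemidef ∧
        t = (1 / 2) * (W₁.trace + W₂.trace)} (nuclearNorm X) := by
  have hPSD : (fromBlocks (U * diagonal σ * Uᵀ) X Xᵀ (V * diagonal σ * Vᵀ)).PosSemidef := by
    rw [transpose_eq_of_svd hSVD, hSVD]
    exact posSemidef_fromBlocks_mul_mul_transpose (posSemidef_diagonal_iff.mpr hσ) U V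
  have hvalue : (1 / 2) * ((U * diagonal σ * Uᵀ).trace + (V * diagonal σ * Vᵀ).trace) =
      nuclearNorm X := by
    rw [trace_mul_diagonal_mul_transpose hU, trace_mul_diagonal_mul_transpose hV,
      nuclearNorm_eq_sum_of_svd hσ hU hV hSVD]
    ring
  refine ⟨hPSD, hvalue, ⟨_, _, hPSD, hvalue.symm⟩, ?_⟩
  rintro t ⟨W₁, W₂, h, rfl⟩
  rw [nuclearNorm_eq_sum_of_svd hσ hU hV hSVD]
  linarith [two_mul_sum_le_trace_add_trace_of_svd hU hV hSVD h]
end
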